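/- arXiv:2311.08980 — 4 statements merged into one kernel-verified Lean document; each statement's English description precedes it below -/
import Mathlib

section
/- Let D ≥ 1 and let H, X, A be D×D real symmetric matrices such that H is positive definite with smallest eigenvalue μ > 0 and H·X + X·H = A (matrix products). Then the Frobenius norms satisfy |X| ≤ |A| / (2μ). -/
open Matrix

/-- The Frobenius norm of a real matrix: `|A| = (trace (A Aᵀ))^(1/2)`. -/
noncomputable def frobNorm {m n : Type*} [Fintype m] [Fintype n]
    (A : Matrix m n ℝ) : ℝ :=
  Real.sqrt ((A * Aᵀ).trace)

lemma frobAux_trace_eq {D : ℕ} (X : Matrix (Fin D) (Fin D) ℝ) :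
    (X * Xᵀ).trace = ∑ p : Fin D × Fin D, X p.1 p.2 ^ 2 := by
  rw [Fintype.sum_prod_type]
  simp [Matrix.trace, Matrix.mul_apply, Matrix.diag, sq]

lemma frobAux_trace_nonneg {D : ℕ} (X : Matrix (Fin D) (Fin D) ℝ) :
    0 ≤ (X * Xᵀ).trace := by
  rw [frobAux_trace_eq]
  exact Finset.sum_nonneg fun _ _ => sq_nonneg _

lemma psd_trace_nonneg {D : ℕ} {P : Matrix (Fin D) (Fin D) ℝ} (hP : P.PosSemidef) :
    0 ≤ P.trace := by
  rw [Matrix.trace]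
  refine Finset.sum_nonneg fun i _ => ?_
  exact hP.diag_nonneg

lemma sub_smul_one_psd {D : ℕ} (H : Matrix (Fin D) (Fin D) ℝ) (hH : H.PosDef) (μ : ℝ)
    (hμ_le : ∀ i, μ ≤ hH.1.eigenvalues i) :
    (H - μ • (1 : Matrix (Fin D) (Fin D) ℝ)).PosSemidef := by
  have h1 : (diagonal (fun i => hH.1.eigenvalues i - μ)).PosSemidef :=
    .diagonal (fun i => by have := hμ_le i; simp; linarith)
  have h2 := h1.mul_mul_conjTranspose_same (hH.1.eigenvectorUnitary : Matrix (Fin D) (Fin D) ℝ)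
  convert h2 using 1
  have hspec := hH.1.spectral_theorem
  rw [Unitary.conjStarAlgAut_apply, star_eq_conjTranspose] at hspec
  have hU : (hH.1.eigenvectorUnitary : Matrix (Fin D) (Fin D) ℝ) *
      star (hH.1.eigenvectorUnitary : Matrix (Fin D) (Fin D) ℝ) = 1 :=
    Unitary.mul_star_self_of_mem (hH.1.eigenvectorUnitary).2
  have hd : (diagonal (fun i => hH.1.eigenvalues i - μ)) =
      diagonal (RCLike.ofReal ∘ hH.1.eigenvalues) - μ • 1 := by
    ext i j
    rcases eq_or_ne i j with h | h <;>
      simp [diagonal_apply, h, Matrix.one_apply, Function.comp, Matrix.sub_apply]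
  rw [hd, Matrix.mul_sub, Matrix.sub_mul, ← hspec]
  congr 1
  simp only [Matrix.mul_smul, Matrix.smul_mul, Matrix.mul_one]
  rw [star_eq_conjTranspose] at hU
  rw [hU]

/-- If `H` is a positive definite symmetric matrix with smallest eigenvalue `μ > 0`,
`X, A` are symmetric, and `H X + X H = A`, then `|X| ≤ |A| / (2 μ)` for the Frobenius norm. -/
theorem frobenius_bound_of_sylvester {D : ℕ} (hD : 1 ≤ D)
    (H X A : Matrix (Fin D) (Fin D) ℝ)
    (hHsymm : H.IsSymm) (hXsymm : X.IsSymm) (hAsymm : A.IsSymm)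
    (hH : H.PosDef) (μ : ℝ) (hμ : 0 < μ)
    (hμ_le : ∀ i, μ ≤ hH.1.eigenvalues i)
    (hμ_mem : ∃ i, hH.1.eigenvalues i = μ)
    (heq : H * X + X * H = A) :
    frobNorm X ≤ frobNorm A / (2 * μ) := by
  have hXt : Xᵀ = X := hXsymm
  -- Step 1: 2 μ * trace(X Xᵀ) ≤ trace (A Xᵀ)
  have hM : (H - μ • (1 : Matrix (Fin D) (Fin D) ℝ)).PosSemidef :=
    sub_smul_one_psd H hH μ hμ_le
  have hXMX := hM.conjTranspose_mul_mul_same X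
  rw [show Xᴴ = X by rw [conjTranspose_eq_transpose_of_trivial, hXt]] at hXMX
  have ht := psd_trace_nonneg hXMX
  have hexp : (X * (H - μ • (1 : Matrix (Fin D) (Fin D) ℝ)) * X).trace
      = (X * H * X).trace - μ * (X * Xᵀ).trace := by
    rw [Matrix.mul_sub, Matrix.sub_mul, trace_sub, Matrix.mul_smul, Matrix.smul_mul,
      trace_smul, Matrix.mul_one, hXt, smul_eq_mul]
  have hkey : μ * (X * Xᵀ).trace ≤ (X * H * X).trace := by
    rw [hexp] at ht; linarith
  have hAX : (A * Xᵀ).trace = 2 * (X * H * X).trace := by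
    rw [hXt, ← heq, Matrix.add_mul, trace_add]
    have : (H * X * X).trace = (X * H * X).trace := by
      rw [trace_mul_comm (H * X) X, ← Matrix.mul_assoc]
    rw [this, Matrix.mul_assoc]
    ring
  have step1 : 2 * μ * (X * Xᵀ).trace ≤ (A * Xᵀ).trace := by
    rw [hAX]; linarith
  -- Step 2: Cauchy-Schwarz: trace (A Xᵀ) ≤ frobNorm A * frobNorm X
  have htrAX : (A * Xᵀ).trace = ∑ p : Fin D × Fin D, A p.1 p.2 * X p.1 p.2 := by
    rw [Fintype.sum_prod_type]
    simp [Matrix.trace, Matrix.mul_apply, Matrix.diag]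
  have step2 : (A * Xᵀ).trace ≤ frobNorm A * frobNorm X := by
    rw [htrAX, frobNorm, frobNorm, frobAux_trace_eq, frobAux_trace_eq]
    calc ∑ p : Fin D × Fin D, A p.1 p.2 * X p.1 p.2
        ≤ |∑ p : Fin D × Fin D, A p.1 p.2 * X p.1 p.2| := le_abs_self _
      _ = Real.sqrt ((∑ p : Fin D × Fin D, A p.1 p.2 * X p.1 p.2) ^ 2) :=
          (Real.sqrt_sq_eq_abs _).symm
      _ ≤ Real.sqrt ((∑ p : Fin D × Fin D, A p.1 p.2 ^ 2) *
            ∑ p : Fin D × Fin D, X p.1 p.2 ^ 2) :=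
          Real.sqrt_le_sqrt (Finset.sum_mul_sq_le_sq_mul_sq _ _ _)
      _ = _ := Real.sqrt_mul (Finset.sum_nonneg fun _ _ => sq_nonneg _) _
  -- Conclusion
  have hXnn : 0 ≤ frobNorm X := Real.sqrt_nonneg _
  have hXsq : frobNorm X ^ 2 = (X * Xᵀ).trace :=
    Real.sq_sqrt (frobAux_trace_nonneg X)
  rcases eq_or_lt_of_le hXnn with h0 | h0
  · rw [← h0]
    exact div_nonneg (Real.sqrt_nonneg _) (by positivity)
  · have hfin : 2 * μ * frobNorm X ^ 2 ≤ frobNorm A * frobNorm X := by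
      rw [hXsq]; linarith
    rw [le_div_iff₀ (by positivity)]
    nlinarith [hfin, h0]
end

section
/- Let D ≥ 1 and let H, X, A, Y be D×D real symmetric matrices such that H is positive definite with smallest eigenvalue μ > 0, H·X + X·H = A, and H·Y + Y·H = −2X². Then the Frobenius norms satisfy |Y| ≤ |X|²/μ, and consequently |Y| ≤ |A|²/(4μ³). -/
open Matrix

section Aux

variable {D : ℕ}

open scoped MatrixOrder

private lemma trace_nonneg_of_psd {P : Matrix (Fin D) (Fin D) ℝ} (hP : P.PosSemidef) :
    0 ≤ P.trace := by
  rw [Matrix.trace]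
  refine Finset.sum_nonneg fun i _ => ?_
  exact hP.diag_nonneg

private lemma trace_mul_nonneg_of_psd {P Q : Matrix (Fin D) (Fin D) ℝ}
    (hP : P.PosSemidef) (hQ : Q.PosSemidef) : 0 ≤ (P * Q).trace := by
  have hSH : (CFC.sqrt Q)ᴴ = CFC.sqrt Q := (CFC.sqrt_nonneg Q).posSemidef.1
  have h1 : P * Q = P * CFC.sqrt Q * CFC.sqrt Q := by
    rw [Matrix.mul_assoc, CFC.sqrt_mul_sqrt_self Q hQ.nonneg]
  rw [h1, Matrix.trace_mul_comm]
  have h2 : CFC.sqrt Q * (P * CFC.sqrt Q) = CFC.sqrt Q * P * (CFC.sqrt Q)ᴴ := by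
    rw [hSH, Matrix.mul_assoc]
  rw [h2]
  exact trace_nonneg_of_psd (hP.mul_mul_conjTranspose_same _)

private lemma psd_mul_self_of_symm {M : Matrix (Fin D) (Fin D) ℝ} (hM : M.IsSymm) :
    (M * M).PosSemidef := by
  have := Matrix.posSemidef_self_mul_conjTranspose M
  rwa [Matrix.conjTranspose_eq_transpose_of_trivial, hM.eq] at this

private lemma trace_mul_transpose_nonneg (M : Matrix (Fin D) (Fin D) ℝ) :
    0 ≤ (M * Mᵀ).trace := by
  have := Matrix.posSemidef_self_mul_conjTranspose M
  rw [Matrix.conjTranspose_eq_transpose_of_trivial] at this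
  exact trace_nonneg_of_psd this

private lemma frobNorm_nonneg (M : Matrix (Fin D) (Fin D) ℝ) : 0 ≤ frobNorm M :=
  Real.sqrt_nonneg _

private lemma sub_smul_one_posSemidef {H : Matrix (Fin D) (Fin D) ℝ} (hH : H.PosDef)
    {μ : ℝ} (hμ_le : ∀ i, μ ≤ hH.1.eigenvalues i) : (H - μ • 1).PosSemidef := by
  have hspec := hH.1.spectral_theorem
  rw [Unitary.conjStarAlgAut_apply] at hspec
  set U : Matrix (Fin D) (Fin D) ℝ := (hH.1.eigenvectorUnitary : Matrix (Fin D) (Fin D) ℝ)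
    with hUdef
  have hU : U * star U = 1 := Matrix.mem_unitaryGroup_iff.mp hH.1.eigenvectorUnitary.2
  have key : H - μ • 1 =
      U * Matrix.diagonal (fun i => hH.1.eigenvalues i - μ) * star U := by
    have h1 : (μ • 1 : Matrix (Fin D) (Fin D) ℝ) = U * (μ • 1) * star U := by
      rw [Matrix.mul_smul, Matrix.mul_one, Matrix.smul_mul, hU]
    calc H - μ • 1
        = U * Matrix.diagonal (RCLike.ofReal ∘ hH.1.eigenvalues) * star U
          - U * (μ • 1) * star U := by rw [← hspec, ← h1]
      _ = U * (Matrix.diagonal (RCLike.ofReal ∘ hH.1.eigenvalues) - μ • 1) * star U := by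
          rw [Matrix.mul_sub, Matrix.sub_mul]
      _ = U * Matrix.diagonal (fun i => hH.1.eigenvalues i - μ) * star U := by
          congr 1
          congr 1
          rw [Matrix.smul_one_eq_diagonal, Matrix.diagonal_sub]
          congr 1
  rw [key]
  have hd : (Matrix.diagonal (fun i => hH.1.eigenvalues i - μ)).PosSemidef :=
    Matrix.posSemidef_diagonal_iff.mpr fun i => sub_nonneg.mpr (hμ_le i)
  have := hd.mul_mul_conjTranspose_same U
  rwa [← Matrix.star_eq_conjTranspose] at this

private lemma sylvester_frob_bound {H M B : Matrix (Fin D) (Fin D) ℝ}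
    (hHs : H.IsSymm) (hMs : M.IsSymm) {μ : ℝ} (hμ : 0 < μ)
    (hPsd : (H - μ • 1).PosSemidef) (heq : H * M + M * H = B) :
    frobNorm M ≤ frobNorm B / (2 * μ) := by
  set P : Matrix (Fin D) (Fin D) ℝ := H - μ • 1 with hPdef
  have hPsymm : P.IsSymm := by
    rw [Matrix.IsSymm, hPdef, Matrix.transpose_sub, hHs.eq, Matrix.transpose_smul,
      Matrix.transpose_one]
  have hHP : H = P + μ • 1 := by rw [hPdef]; abel
  clear_value P
  have hBdef : B = P * M + M * P + (2 * μ) • M := by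
    rw [← heq, hHP]
    rw [Matrix.add_mul, Matrix.mul_add, Matrix.smul_mul, Matrix.mul_smul,
      Matrix.one_mul, Matrix.mul_one]
    module
  have hBsymm : Bᵀ = B := by
    rw [← heq, Matrix.transpose_add, Matrix.transpose_mul, Matrix.transpose_mul,
      hHs.eq, hMs.eq]
    abel
  -- nonnegativity of the three cross terms
  have hMM : (M * M).PosSemidef := psd_mul_self_of_symm hMs
  have hPP : (P * P).PosSemidef := psd_mul_self_of_symm hPsymm
  have hc1 : 0 ≤ (P * (M * M)).trace := trace_mul_nonneg_of_psd hPsd hMM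
  have hc2 : 0 ≤ ((P * P) * (M * M)).trace := trace_mul_nonneg_of_psd hPP hMM
  have hc3 : 0 ≤ (P * M * (P * M)).trace := by
    set S := CFC.sqrt P with hSdef
    clear_value S
    have hSsymm : Sᵀ = S := by
      have h := (CFC.sqrt_nonneg P).posSemidef.1.eq
      rw [hSdef]
      rw [Matrix.conjTranspose_eq_transpose_of_trivial] at h
      exact h
    have hP2 : S * S = P := by rw [hSdef]; exact CFC.sqrt_mul_sqrt_self P hPsd.nonneg
    have e : P * M * (P * M) = S * (S * M * S * S * M) := by rw [← hP2]; noncomm_ring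
    have e2 : S * M * S * S * M * S = (S * M * S) * (S * M * S) := by noncomm_ring
    rw [e, Matrix.trace_mul_comm, e2]
    have hN : (S * M * S)ᵀ = S * M * S := by
      rw [Matrix.transpose_mul, Matrix.transpose_mul, hSsymm, hMs.eq]
      noncomm_ring
    calc (0:ℝ) ≤ ((S * M * S) * (S * M * S)ᵀ).trace := trace_mul_transpose_nonneg _
      _ = ((S * M * S) * (S * M * S)).trace := by rw [hN]
  have htM : 0 ≤ (M * M).trace := trace_nonneg_of_psd hMM
  -- the trace identity
  have hdecomp : (B * B).trace =
      4 * μ ^ 2 * (M * M).trace + 8 * μ * (P * (M * M)).trace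
        + 2 * ((P * P) * (M * M)).trace + 2 * (P * M * (P * M)).trace := by
    rw [hBdef]
    simp only [Matrix.add_mul, Matrix.mul_add, Matrix.smul_mul, Matrix.mul_smul,
      Matrix.trace_add, Matrix.trace_smul, smul_eq_mul, smul_smul]
    have e1 : (M * P * (P * M)).trace = (P * P * (M * M)).trace := by
      rw [show M * P * (P * M) = M * (P * (P * M)) from by noncomm_ring,
        Matrix.trace_mul_comm, show P * (P * M) * M = P * P * (M * M) from by noncomm_ring]
    have e2 : (M * (P * M)).trace = (P * (M * M)).trace := by
      rw [Matrix.trace_mul_comm, show P * M * M = P * (M * M) from by noncomm_ring]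
    have e3 : (P * M * (M * P)).trace = (P * P * (M * M)).trace := by
      rw [show P * M * (M * P) = P * M * M * P from by noncomm_ring,
        Matrix.trace_mul_comm, show P * (P * M * M) = P * P * (M * M) from by noncomm_ring]
    have e4 : (M * P * (M * P)).trace = (P * M * (P * M)).trace := by
      rw [show M * P * (M * P) = M * (P * (M * P)) from by noncomm_ring,
        Matrix.trace_mul_comm, show P * (M * P) * M = P * M * (P * M) from by noncomm_ring]
    have e5 : (M * (M * P)).trace = (P * (M * M)).trace := by
      rw [show M * (M * P) = M * M * P from by noncomm_ring, Matrix.trace_mul_comm]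
    have e6 : (P * M * M).trace = (P * (M * M)).trace := by rw [Matrix.mul_assoc]
    have e7 : (M * P * M).trace = (P * (M * M)).trace := by
      rw [Matrix.trace_mul_comm]
      exact e5
    rw [e1, e2, e3, e4, e5, e6, e7]
    ring
  have h2μ : (0:ℝ) < 2 * μ := by linarith
  rw [frobNorm, frobNorm, hMs.eq, hBsymm, le_div_iff₀ h2μ]
  have hsq : Real.sqrt ((M * M).trace) * (2 * μ) = Real.sqrt ((M * M).trace * (2 * μ) ^ 2) := by
    rw [Real.sqrt_mul htM, Real.sqrt_sq (le_of_lt h2μ)]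
  rw [hsq]
  apply Real.sqrt_le_sqrt
  nlinarith [hdecomp, hc1, hc2, hc3]

attribute [local instance] Matrix.frobeniusSeminormedAddCommGroup

private lemma frobNorm_eq_norm (A : Matrix (Fin D) (Fin D) ℝ) : frobNorm A = ‖A‖ := by
  rw [frobNorm, Matrix.frobenius_norm_def, Real.sqrt_eq_rpow]
  congr 1
  rw [Matrix.trace]
  refine Finset.sum_congr rfl fun i _ => ?_
  simp only [Matrix.diag_apply, Matrix.mul_apply, Matrix.transpose_apply, Real.norm_eq_abs,
    Real.rpow_two, sq_abs]
  refine Finset.sum_congr rfl fun j _ => ?_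
  ring

private lemma frobNorm_mul_le (A B : Matrix (Fin D) (Fin D) ℝ) :
    frobNorm (A * B) ≤ frobNorm A * frobNorm B := by
  rw [frobNorm_eq_norm, frobNorm_eq_norm, frobNorm_eq_norm]
  exact Matrix.frobenius_norm_mul A B

private lemma frobNorm_smul (c : ℝ) (A : Matrix (Fin D) (Fin D) ℝ) :
    frobNorm (c • A) = |c| * frobNorm A := by
  rw [frobNorm, frobNorm, Matrix.transpose_smul, Matrix.smul_mul, Matrix.mul_smul, smul_smul,
    Matrix.trace_smul, smul_eq_mul, show c * c = c ^ 2 from by ring,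
    Real.sqrt_mul (sq_nonneg c), Real.sqrt_sq_eq_abs]

end Aux

/-- If `H` is positive definite symmetric with smallest eigenvalue `μ > 0`, `X, A, Y` are
symmetric, `H X + X H = A` and `H Y + Y H = -2 X²`, then `|Y| ≤ |X|² / μ` and consequently
`|Y| ≤ |A|² / (4 μ³)`, for the Frobenius norm. -/
theorem frobenius_second_order_bound_of_sylvester {D : ℕ} (hD : 1 ≤ D)
    (H X A Y : Matrix (Fin D) (Fin D) ℝ)
    (hHsymm : H.IsSymm) (hXsymm : X.IsSymm) (hAsymm : A.IsSymm) (hYsymm : Y.IsSymm)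
    (hH : H.PosDef) (μ : ℝ) (hμ : 0 < μ)
    (hμ_le : ∀ i, μ ≤ hH.1.eigenvalues i)
    (hμ_mem : ∃ i, hH.1.eigenvalues i = μ)
    (heqX : H * X + X * H = A)
    (heqY : H * Y + Y * H = -(2 : ℝ) • (X * X)) :
    frobNorm Y ≤ frobNorm X ^ 2 / μ ∧ frobNorm Y ≤ frobNorm A ^ 2 / (4 * μ ^ 3) := by
  have hPsd : (H - μ • 1).PosSemidef := sub_smul_one_posSemidef hH hμ_le
  have hX : frobNorm X ≤ frobNorm A / (2 * μ) :=
    sylvester_frob_bound hHsymm hXsymm hμ hPsd heqX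
  have hY : frobNorm Y ≤ frobNorm (-(2 : ℝ) • (X * X)) / (2 * μ) :=
    sylvester_frob_bound hHsymm hYsymm hμ hPsd heqY
  have hXXnn : 0 ≤ frobNorm (X * X) := frobNorm_nonneg _
  have hXnn : 0 ≤ frobNorm X := frobNorm_nonneg _
  have hAnn : 0 ≤ frobNorm A := frobNorm_nonneg _
  have hsmul : frobNorm (-(2 : ℝ) • (X * X)) = 2 * frobNorm (X * X) := by
    rw [frobNorm_smul]
    norm_num
  have hXX : frobNorm (X * X) ≤ frobNorm X ^ 2 := by
    have := frobNorm_mul_le X X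
    nlinarith
  have h1 : frobNorm Y ≤ frobNorm X ^ 2 / μ := by
    rw [hsmul] at hY
    calc frobNorm Y ≤ 2 * frobNorm (X * X) / (2 * μ) := hY
      _ ≤ 2 * frobNorm X ^ 2 / (2 * μ) := by gcongr
      _ = frobNorm X ^ 2 / μ := by field_simp
  refine ⟨h1, ?_⟩
  have hX2 : frobNorm X ^ 2 ≤ (frobNorm A / (2 * μ)) ^ 2 := by
    apply pow_le_pow_left₀ hXnn hX
  calc frobNorm Y ≤ frobNorm X ^ 2 / μ := h1
    _ ≤ (frobNorm A / (2 * μ)) ^ 2 / μ := by gcongr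
    _ = frobNorm A ^ 2 / (4 * μ ^ 3) := by
        rw [div_pow, div_div]
        congr 1
        ring
end

section
/- Let n, D ≥ 1 and ρ ∈ ℝ, and let R : {1,…,n} × {1,…,n} → ℝ satisfy: R(i,j) = R(j,i) for all i,j; R(i,i) = ρ for all i; R(i,j) ≤ ρ for all i,j; and the ultrametric inequality R(i,l) ≥ min(R(i,j), R(j,l)) for all i,j,l. Let q : ℝ → (D×D real symmetric matrices) be such that every value q(s) is positive semidefinite and q is increasing for the Loewner order (s ≤ t implies q(t) − q(s) positive semidefinite). Then the nD×nD block matrix M whose ((i,d),(j,e)) entry is the (d,e) entry of q(R(i,j)) is positive semidefinite. -/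
open Matrix

lemma dp_sum_left {ι D : Type*} [Fintype D] (s : Finset ι) (f : ι → D → ℝ) (v : D → ℝ) :
    (∑ i ∈ s, f i) ⬝ᵥ v = ∑ i ∈ s, f i ⬝ᵥ v := by
  simp [dotProduct, Finset.sum_mul]
  exact Finset.sum_comm

lemma dp_sum_right {ι D : Type*} [Fintype D] (s : Finset ι) (f : ι → D → ℝ) (v : D → ℝ) :
    v ⬝ᵥ (∑ i ∈ s, f i) = ∑ i ∈ s, v ⬝ᵥ f i := by
  simp [dotProduct, Finset.mul_sum]
  exact Finset.sum_comm

lemma quad_sum {n' D : ℕ} (A : Matrix (Fin D) (Fin D) ℝ) (s : Finset (Fin n')) (y : Fin n' → Fin D → ℝ) :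
    ∑ i ∈ s, ∑ j ∈ s, y i ⬝ᵥ (A *ᵥ y j) = (∑ i ∈ s, y i) ⬝ᵥ (A *ᵥ ∑ j ∈ s, y j) := by
  rw [dp_sum_left, show (A *ᵥ ∑ j ∈ s, y j) = ∑ j ∈ s, A *ᵥ y j from map_sum A.mulVecLin _ _]
  exact Finset.sum_congr rfl fun i _ => (dp_sum_right _ _ _).symm

lemma psd_quad {D : ℕ} {A : Matrix (Fin D) (Fin D) ℝ} (hA : A.PosSemidef) (z : Fin D → ℝ) :
    0 ≤ z ⬝ᵥ (A *ᵥ z) := by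
  have := hA.dotProduct_mulVec_nonneg z
  simpa using this

lemma key_lemma {n D : ℕ} (R : Fin n → Fin n → ℝ)
    (hRsymm : ∀ i j, R i j = R j i)
    (hRultra : ∀ i j l, min (R i j) (R j l) ≤ R i l)
    (q : ℝ → Matrix (Fin D) (Fin D) ℝ)
    (hq_mono : ∀ s t : ℝ, s ≤ t → (q t - q s).PosSemidef)
    (y : Fin n → Fin D → ℝ) :
    ∀ (k : ℕ) (s : Finset (Fin n)) (t : ℝ), s.card ≤ k →
      (∀ i ∈ s, ∀ j ∈ s, t ≤ R i j) →
      0 ≤ ∑ i ∈ s, ∑ j ∈ s, y i ⬝ᵥ ((q (R i j) - q t) *ᵥ y j) := by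
  intro k
  induction k with
  | zero =>
    intro s t hcard _
    rw [Finset.card_eq_zero.mp (Nat.le_zero.mp hcard)]
    simp
  | succ k ih =>
    intro s t hcard hts
    rcases s.eq_empty_or_nonempty with rfl | hs
    · simp
    have hP : (s ×ˢ s).Nonempty := hs.product hs
    set t' := (s ×ˢ s).inf' hP (fun p => R p.1 p.2) with ht'def
    have ht'le : ∀ i ∈ s, ∀ j ∈ s, t' ≤ R i j := fun i hi j hj =>
      Finset.inf'_le (fun p => R p.1 p.2) (Finset.mem_product.mpr (⟨hi, hj⟩ : (i, j).1 ∈ s ∧ (i, j).2 ∈ s))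
    have htt' : t ≤ t' := Finset.le_inf' _ _ (fun p hp => by
      have := Finset.mem_product.mp hp
      exact hts _ this.1 _ this.2)
    have hdecomp : ∀ i j : Fin n,
        y i ⬝ᵥ ((q (R i j) - q t) *ᵥ y j)
          = y i ⬝ᵥ ((q (R i j) - q t') *ᵥ y j) + y i ⬝ᵥ ((q t' - q t) *ᵥ y j) := by
      intro i j
      rw [show (q (R i j) - q t) = (q (R i j) - q t') + (q t' - q t) from
        (sub_add_sub_cancel _ _ _).symm, Matrix.add_mulVec, dotProduct_add]
    simp only [hdecomp, Finset.sum_add_distrib]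
    have hB : 0 ≤ ∑ i ∈ s, ∑ j ∈ s, y i ⬝ᵥ ((q t' - q t) *ᵥ y j) := by
      rw [quad_sum]
      exact psd_quad (hq_mono t t' htt') _
    have hA : 0 ≤ ∑ i ∈ s, ∑ j ∈ s, y i ⬝ᵥ ((q (R i j) - q t') *ᵥ y j) := by
      by_cases hall : ∀ i ∈ s, ∀ j ∈ s, R i j = t'
      · refine le_of_eq (Finset.sum_eq_zero fun i hi => Finset.sum_eq_zero fun j hj => ?_).symm
        rw [hall i hi j hj]
        simp
      · push_neg at hall
        obtain ⟨a, ha, j0, hj0, hne⟩ := hall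
        have haj0 : t' < R a j0 := lt_of_le_of_ne (ht'le a ha j0 hj0) (Ne.symm hne)
        have haa : t' < R a a := lt_of_lt_of_le (by
            rw [lt_min_iff]
            exact ⟨haj0, by rw [← hRsymm]; exact haj0⟩)
          (hRultra a j0 a)
        set s1 := s.filter (fun j => t' < R a j) with hs1def
        set s2 := s.filter (fun j => ¬ t' < R a j) with hs2def
        have hmem1 : ∀ i, i ∈ s1 ↔ i ∈ s ∧ t' < R a i := fun i => Finset.mem_filter
        have hmem2 : ∀ i, i ∈ s2 ↔ i ∈ s ∧ ¬ t' < R a i := fun i => Finset.mem_filter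
        have ha1 : a ∈ s1 := (hmem1 a).mpr ⟨ha, haa⟩
        -- min is attained
        obtain ⟨p, hp, hpeq⟩ := Finset.exists_mem_eq_inf' hP (fun p => R p.1 p.2)
        obtain ⟨hb1, hb2⟩ := Finset.mem_product.mp hp
        have hs2ne : s2.Nonempty := by
          by_contra hempty
          rw [Finset.not_nonempty_iff_eq_empty] at hempty
          have hall' : ∀ j ∈ s, t' < R a j := by
            intro j hj
            by_contra hnj
            have : j ∈ s2 := (hmem2 j).mpr ⟨hj, hnj⟩
            simp [hempty] at this
          have h1 : t' < R p.1 a := by rw [hRsymm]; exact hall' p.1 hb1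
          have h2 : t' < R a p.2 := hall' p.2 hb2
          have := hRultra p.1 a p.2
          rw [← hpeq] at this
          exact absurd this (not_le.mpr (lt_min h1 h2))
        have hs1ne : s1.Nonempty := ⟨a, ha1⟩
        have hdisj : Disjoint s1 s2 := Finset.disjoint_filter_filter_not s s _
        have hunion : s1 ∪ s2 = s := Finset.filter_union_filter_not_eq _ s
        have hcards : s1.card + s2.card = s.card :=
          Finset.card_filter_add_card_filter_not (p := fun j => t' < R a j)
        have hc1 : s1.card ≤ k := by
          have := Finset.card_pos.mpr hs2ne
          omega
        have hc2 : s2.card ≤ k := by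
          have := Finset.card_pos.mpr hs1ne
          omega
        have hcross : ∀ i ∈ s1, ∀ j ∈ s2, R i j = t' := by
          intro i hi j hj
          obtain ⟨his, hia⟩ := (hmem1 i).mp hi
          obtain ⟨hjs, hja⟩ := (hmem2 j).mp hj
          refine le_antisymm ?_ (ht'le i his j hjs)
          by_contra hgt
          push_neg at hgt
          have h1 : t' < R a i := hia
          have h2 : min (R a i) (R i j) ≤ R a j := hRultra a i j
          exact hja (lt_of_lt_of_le (lt_min h1 hgt) h2)
        have hzero1 : ∑ i ∈ s1, ∑ j ∈ s2, y i ⬝ᵥ ((q (R i j) - q t') *ᵥ y j) = 0 := by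
          refine Finset.sum_eq_zero fun i hi => Finset.sum_eq_zero fun j hj => ?_
          rw [hcross i hi j hj]
          simp
        have hzero2 : ∑ i ∈ s2, ∑ j ∈ s1, y i ⬝ᵥ ((q (R i j) - q t') *ᵥ y j) = 0 := by
          refine Finset.sum_eq_zero fun i hi => Finset.sum_eq_zero fun j hj => ?_
          rw [hRsymm, hcross j hj i hi]
          simp
        have hle1 : ∀ i ∈ s1, ∀ j ∈ s1, t' ≤ R i j := fun i hi j hj =>
          ht'le i (Finset.filter_subset _ _ hi) j (Finset.filter_subset _ _ hj)
        have hle2 : ∀ i ∈ s2, ∀ j ∈ s2, t' ≤ R i j := fun i hi j hj =>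
          ht'le i (Finset.filter_subset _ _ hi) j (Finset.filter_subset _ _ hj)
        have h11 := ih s1 t' hc1 hle1
        have h22 := ih s2 t' hc2 hle2
        calc (0:ℝ) ≤ (∑ i ∈ s1, ∑ j ∈ s1, y i ⬝ᵥ ((q (R i j) - q t') *ᵥ y j))
              + ∑ i ∈ s2, ∑ j ∈ s2, y i ⬝ᵥ ((q (R i j) - q t') *ᵥ y j) := by linarith
          _ = ∑ i ∈ s, ∑ j ∈ s, y i ⬝ᵥ ((q (R i j) - q t') *ᵥ y j) := by
              rw [← hunion]
              simp only [Finset.sum_union hdisj, Finset.sum_add_distrib]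
              rw [hzero1, hzero2]
              ring
    linarith

/-- Positive semidefiniteness of the block kernel `(i,j) ↦ q (R i j)` when `R` is a
finite ultrametric overlap matrix and `q` is an increasing path of positive semidefinite
symmetric matrices. -/
theorem posSemidef_ultrametric_kernel {n D : ℕ} (hn : 1 ≤ n) (hD : 1 ≤ D) (ρ : ℝ)
    (R : Fin n → Fin n → ℝ)
    (hRsymm : ∀ i j, R i j = R j i)
    (hRdiag : ∀ i, R i i = ρ)
    (hRle : ∀ i j, R i j ≤ ρ)
    (hRultra : ∀ i j l, min (R i j) (R j l) ≤ R i l)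
    (q : ℝ → Matrix (Fin D) (Fin D) ℝ)
    (hq_psd : ∀ s, (q s).PosSemidef)
    (hq_mono : ∀ s t : ℝ, s ≤ t → (q t - q s).PosSemidef) :
    (Matrix.of fun p p' : Fin n × Fin D => q (R p.1 p'.1) p.2 p'.2).PosSemidef := by
  rw [Matrix.posSemidef_iff_dotProduct_mulVec]
  constructor
  · show _ = _
    ext p p'
    simp only [conjTranspose_apply, of_apply, star_trivial]
    rw [hRsymm p'.1 p.1]
    exact ((hq_psd (R p.1 p'.1)).1.apply p.2 p'.2).symm ▸ rfl
  · intro x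
    haveI hne : Nonempty (Fin n) := ⟨⟨0, hn⟩⟩
    set y : Fin n → Fin D → ℝ := fun i d => x (i, d) with hy
    have hform : star x ⬝ᵥ ((Matrix.of fun p p' : Fin n × Fin D =>
        q (R p.1 p'.1) p.2 p'.2) *ᵥ x) = ∑ i : Fin n, ∑ j : Fin n, y i ⬝ᵥ (q (R i j) *ᵥ y j) := by
      simp only [dotProduct, Matrix.mulVec, Matrix.of_apply, Fintype.sum_prod_type,
        Finset.mul_sum, Pi.star_apply, star_trivial, hy]
      exact Finset.sum_congr rfl fun i _ => Finset.sum_comm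
    rw [hform]
    have hPne : ((Finset.univ : Finset (Fin n)) ×ˢ Finset.univ).Nonempty :=
      (Finset.univ_nonempty (α := Fin n)).product (Finset.univ_nonempty (α := Fin n))
    set t0 := ((Finset.univ : Finset (Fin n)) ×ˢ Finset.univ).inf' hPne (fun p => R p.1 p.2)
      with ht0
    have ht0le : ∀ i j : Fin n, t0 ≤ R i j := fun i j =>
      Finset.inf'_le (fun p => R p.1 p.2)
        (Finset.mem_product.mpr (⟨Finset.mem_univ i, Finset.mem_univ j⟩ :
          (i, j).1 ∈ Finset.univ ∧ (i, j).2 ∈ Finset.univ))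
    have hdecomp : ∀ i j : Fin n,
        y i ⬝ᵥ (q (R i j) *ᵥ y j)
          = y i ⬝ᵥ ((q (R i j) - q t0) *ᵥ y j) + y i ⬝ᵥ (q t0 *ᵥ y j) := by
      intro i j
      rw [Matrix.sub_mulVec, dotProduct_sub]
      ring
    simp only [hdecomp, Finset.sum_add_distrib]
    have h1 := key_lemma R hRsymm hRultra q hq_mono y Finset.univ.card Finset.univ t0
      le_rfl (fun i _ j _ => ht0le i j)
    have h2 : 0 ≤ ∑ i : Fin n, ∑ j : Fin n, y i ⬝ᵥ (q t0 *ᵥ y j) := by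
      rw [quad_sum]
      exact psd_quad (hq_psd t0) _
    linarith
end

section
/- Let D ≥ 1 and let κ : [0,1] → (D×D real symmetric matrices) be measurable and square-integrable with respect to Lebesgue measure (for the Frobenius norm). Then the following are equivalent: (i) for every measurable, square-integrable q : [0,1] → (D×D real symmetric matrices) such that q(0) is positive semidefinite and q is increasing for the Loewner order (u ≤ v implies q(v) − q(u) positive semidefinite), one has ∫_0^1 trace(κ(u) q(u)) du ≥ 0; (ii) for every t ∈ [0,1), the matrix ∫_t^1 κ(u) du is positive semidefinite. -/
open Matrix MeasureTheory

section helpers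
variable {D : ℕ}

lemma psd_diag_nonneg {M : Matrix (Fin D) (Fin D) ℝ} (hM : M.PosSemidef) (d : Fin D) :
    0 ≤ M d d := by
  have := hM.dotProduct_mulVec_nonneg (Pi.single d 1)
  simpa [Matrix.mulVec, dotProduct, Pi.single_apply] using this

lemma psd_abs_entry_le_trace {M : Matrix (Fin D) (Fin D) ℝ} (hM : M.PosSemidef)
    (d e : Fin D) : |M d e| ≤ M.trace := by
  have hdiag : ∀ i, 0 ≤ M i i := psd_diag_nonneg hM
  have htr : ∀ i : Fin D, M i i ≤ M.trace := by
    intro i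
    exact Finset.single_le_sum (fun j _ => hdiag j) (Finset.mem_univ i)
  have hsym : M e d = M d e := by
    have := hM.isHermitian
    calc M e d = Mᴴ d e := by simp [Matrix.conjTranspose_apply]
    _ = M d e := by rw [this]
  have h1 := hM.dotProduct_mulVec_nonneg (Pi.single d 1 + Pi.single e 1)
  have h2 := hM.dotProduct_mulVec_nonneg (Pi.single d 1 - Pi.single e 1)
  have e1 : (0:ℝ) ≤ M d d + M e d + (M d e + M e e) := by
    simpa [Matrix.mulVec, dotProduct, Pi.single_apply, Finset.mul_sum, Finset.sum_add_distrib,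
      mul_add, add_mul, Finset.sum_sub_distrib] using h1
  have e2 : (0:ℝ) ≤ M d d - M e d - (M d e - M e e) := by
    simpa [Matrix.mulVec, dotProduct, Pi.single_apply, Finset.mul_sum, Finset.sum_add_distrib,
      mul_add, add_mul, sub_mul, mul_sub, Finset.sum_sub_distrib] using h2
  rw [abs_le]
  constructor
  · nlinarith [htr d, htr e, hsym]
  · nlinarith [htr d, htr e, hsym, hdiag d, hdiag e]

end helpers

section abel
variable {D : ℕ}

lemma trace_psd_nonneg {A : Matrix (Fin D) (Fin D) ℝ} (hA : A.PosSemidef) :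
    0 ≤ A.trace := by
  rw [Matrix.trace]
  exact Finset.sum_nonneg fun i _ => psd_diag_nonneg hA i

open scoped MatrixOrder in
lemma trace_mul_psd_nonneg {A B : Matrix (Fin D) (Fin D) ℝ}
    (hA : A.PosSemidef) (hB : B.PosSemidef) : 0 ≤ (A * B).trace := by
  obtain ⟨X, hX⟩ := CStarAlgebra.nonneg_iff_eq_star_mul_self.mp hA.nonneg
  have h2 : (A * B).trace = (X * B * Xᴴ).trace := by
    rw [hX, Matrix.star_eq_conjTranspose, Matrix.mul_assoc, Matrix.trace_mul_comm]
  rw [h2]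
  exact trace_psd_nonneg (hB.mul_mul_conjTranspose_same X)

lemma abel_nonneg {N : ℕ} (a b : ℕ → Matrix (Fin D) (Fin D) ℝ)
    (ha : ∀ i < N, (a i).PosSemidef) (haN : a N = 0) (hb0 : (b 0).PosSemidef)
    (hbmono : ∀ i, i + 1 < N → (b (i + 1) - b i).PosSemidef) :
    0 ≤ ∑ i ∈ Finset.range N, ((a i - a (i + 1)) * b i).trace := by
  rcases Nat.eq_zero_or_pos N with h0 | hpos
  · simp [h0]
  obtain ⟨m, rfl⟩ : ∃ m, N = m + 1 := ⟨N - 1, (Nat.succ_pred_eq_of_pos hpos).symm⟩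
  have key : ∑ i ∈ Finset.range (m + 1), ((a i - a (i + 1)) * b i).trace
      = (a 0 * b 0).trace + ∑ i ∈ Finset.range m, (a (i + 1) * (b (i + 1) - b i)).trace
        - (a (m + 1) * b m).trace := by
    have expand : ∀ i : ℕ, ((a i - a (i + 1)) * b i).trace
        = (a i * b i).trace - (a (i + 1) * b i).trace := by
      intro i; rw [Matrix.sub_mul, Matrix.trace_sub]
    have expand2 : ∀ i : ℕ, (a (i + 1) * (b (i + 1) - b i)).trace
        = (a (i + 1) * b (i + 1)).trace - (a (i + 1) * b i).trace := by
      intro i; rw [Matrix.mul_sub, Matrix.trace_sub]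
    simp only [expand, expand2, Finset.sum_sub_distrib]
    rw [Finset.sum_range_succ' (fun i => (a i * b i).trace) m,
      Finset.sum_range_succ (fun i => (a (i + 1) * b i).trace) m]
    ring
  rw [key, haN, Matrix.zero_mul, Matrix.trace_zero, sub_zero]
  have h1 : 0 ≤ (a 0 * b 0).trace :=
    trace_mul_psd_nonneg (ha 0 (Nat.succ_pos m)) hb0
  have h2 : 0 ≤ ∑ i ∈ Finset.range m, (a (i + 1) * (b (i + 1) - b i)).trace := by
    refine Finset.sum_nonneg fun i hi => ?_
    have hiN : i + 1 < m + 1 := by simpa using Finset.mem_range.mp hi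
    exact trace_mul_psd_nonneg (ha (i + 1) hiN) (hbmono i hiN)
  linarith

end abel

variable {D : ℕ}

lemma vecMulVec_psd (x : Fin D → ℝ) :
    (Matrix.of fun d e => x d * x e : Matrix (Fin D) (Fin D) ℝ).PosSemidef := by
  have h : (Matrix.of fun d e => x d * x e : Matrix (Fin D) (Fin D) ℝ)
      = Matrix.replicateCol Unit x * (Matrix.replicateCol Unit x)ᴴ := by
    ext i j
    simp [Matrix.mul_apply, Matrix.replicateCol, Matrix.conjTranspose_apply]
  rw [h]
  exact Matrix.posSemidef_self_mul_conjTranspose _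

lemma forward_dir {D : ℕ}
    (κ : ℝ → Matrix (Fin D) (Fin D) ℝ)
    (hκsymm : ∀ u ∈ Set.Icc (0:ℝ) 1, (κ u).IsSymm)
    (hκmeas : ∀ d e, Measurable fun u => κ u d e)
    (hκL2 : ∀ d e, MemLp (fun u => κ u d e) 2 (volume.restrict (Set.Icc (0:ℝ) 1)))
    (hi : ∀ q : ℝ → Matrix (Fin D) (Fin D) ℝ,
        (∀ u ∈ Set.Icc (0:ℝ) 1, (q u).IsSymm) →
        (∀ d e, Measurable fun u => q u d e) →
        (∀ d e, MemLp (fun u => q u d e) 2 (volume.restrict (Set.Icc (0:ℝ) 1))) →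
        (q 0).PosSemidef →
        (∀ u ∈ Set.Icc (0:ℝ) 1, ∀ v ∈ Set.Icc (0:ℝ) 1, u ≤ v → (q v - q u).PosSemidef) →
        0 ≤ ∫ u in Set.Icc (0:ℝ) 1, (κ u * q u).trace) :
    ∀ t ∈ Set.Ico (0:ℝ) 1,
      (Matrix.of fun d e => ∫ u in Set.Icc t 1, κ u d e).PosSemidef := by
  intro t ht
  obtain ⟨ht0, ht1⟩ := ht
  have hsub : Set.Icc t 1 ⊆ Set.Icc (0:ℝ) 1 := Set.Icc_subset_Icc_left ht0
  have hκint : ∀ d e, Integrable (fun u => κ u d e) (volume.restrict (Set.Icc t 1)) := by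
    intro d e
    exact ((hκL2 d e).integrable one_le_two).mono_measure
      (Measure.restrict_mono hsub le_rfl)
  refine Matrix.PosSemidef.of_dotProduct_mulVec_nonneg ?_ ?_
  · -- Hermitian
    show _ᴴ = _
    ext d e
    simp only [Matrix.conjTranspose_apply, Matrix.of_apply, star_trivial]
    refine setIntegral_congr_fun measurableSet_Icc fun u hu => ?_
    have hs := hκsymm u (hsub hu)
    calc κ u e d = (κ u)ᵀ d e := rfl
    _ = κ u d e := by rw [hs]
  · intro y
    set P : Matrix (Fin D) (Fin D) ℝ := Matrix.of fun d e => y d * y e with hP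
    set q : ℝ → Matrix (Fin D) (Fin D) ℝ := fun u => if t ≤ u then P else 0 with hq
    have hPpsd : P.PosSemidef := vecMulVec_psd y
    have key := hi q ?_ ?_ ?_ ?_ ?_
    rotate_left
    · intro u _
      by_cases h : t ≤ u <;> simp only [hq, h, if_true, if_false]
      · ext d e; simp [hP, mul_comm]
      · exact Matrix.isSymm_zero
    · intro d e
      have : (fun u => q u d e) = fun u => if t ≤ u then P d e else 0 := by
        funext u; by_cases h : t ≤ u <;> simp [hq, h]
      rw [this]
      exact Measurable.ite measurableSet_Ici measurable_const measurable_const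
    · intro d e
      have : (fun u => q u d e) = Set.indicator (Set.Ici t) (fun _ => P d e) := by
        funext u
        by_cases h : t ≤ u <;> simp [hq, h, Set.indicator_apply, Set.mem_Ici]
      rw [this]
      exact (memLp_const _).indicator measurableSet_Ici
    · by_cases h : t ≤ 0 <;> simp only [hq, h, if_true, if_false]
      · exact hPpsd
      · exact Matrix.PosSemidef.zero
    · intro u _ v _ huv
      by_cases hu : t ≤ u
      · have hv : t ≤ v := le_trans hu huv
        simp only [hq, hu, hv, if_true, sub_self]
        exact Matrix.PosSemidef.zero
      · by_cases hv : t ≤ v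
        · simp only [hq, hu, hv, if_true, if_false, sub_zero]
          exact hPpsd
        · simp only [hq, hu, hv, if_false, sub_self]
          exact Matrix.PosSemidef.zero
    -- now compute
    have step1 : ∀ u, (κ u * q u).trace
        = Set.indicator (Set.Ici t) (fun u => ∑ d, ∑ e, κ u d e * (y e * y d)) u := by
      intro u
      by_cases h : t ≤ u
      · rw [Set.indicator_of_mem (Set.mem_Ici.mpr h)]
        simp only [hq, h, if_true]
        simp [Matrix.trace, Matrix.mul_apply, Matrix.diag, hP]
      · rw [Set.indicator_of_notMem (by simpa [Set.mem_Ici] using h)]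
        simp [hq, h]
    have step2 : ∫ u in Set.Icc (0:ℝ) 1, (κ u * q u).trace
        = ∫ u in Set.Icc t 1, ∑ d, ∑ e, κ u d e * (y e * y d) := by
      simp_rw [step1]
      rw [setIntegral_indicator measurableSet_Ici]
      congr 1
      have hset : Set.Icc (0:ℝ) 1 ∩ Set.Ici t = Set.Icc t 1 := by
        ext x
        simp only [Set.mem_inter_iff, Set.mem_Icc, Set.mem_Ici]
        constructor
        · rintro ⟨⟨_, h1⟩, h2⟩; exact ⟨h2, h1⟩
        · rintro ⟨h1, h2⟩; exact ⟨⟨le_trans ht0 h1, h2⟩, h1⟩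
      rw [hset]
    have step3 : ∫ u in Set.Icc t 1, ∑ d, ∑ e, κ u d e * (y e * y d)
        = ∑ d, ∑ e, (∫ u in Set.Icc t 1, κ u d e) * (y e * y d) := by
      rw [integral_finset_sum]
      · refine Finset.sum_congr rfl fun d _ => ?_
        rw [integral_finset_sum]
        · exact Finset.sum_congr rfl fun e _ => integral_mul_const _ _
        · exact fun e _ => (hκint d e).mul_const _
      · intro d _
        exact integrable_finset_sum _ fun e _ => (hκint d e).mul_const _
    have := key
    rw [step2, step3] at this
    -- conclude
    have goal_eq : star y ⬝ᵥ ((Matrix.of fun d e => ∫ u in Set.Icc t 1, κ u d e) *ᵥ y)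
        = ∑ d, ∑ e, (∫ u in Set.Icc t 1, κ u d e) * (y e * y d) := by
      simp only [dotProduct, Matrix.mulVec, star_trivial, Matrix.of_apply,
        Finset.mul_sum]
      refine Finset.sum_congr rfl fun d _ => Finset.sum_congr rfl fun e _ => by ring
    rw [goal_eq]
    exact this

section backward

lemma trace_mul_expand {D : ℕ} (A B : Matrix (Fin D) (Fin D) ℝ) :
    (A * B).trace = ∑ d, ∑ e, B e d * A d e := by
  simp only [Matrix.trace, Matrix.diag, Matrix.mul_apply]
  exact Finset.sum_congr rfl fun d _ => Finset.sum_congr rfl fun e _ => mul_comm _ _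

lemma trace_mul_abs_le {D : ℕ} {A B : Matrix (Fin D) (Fin D) ℝ} {C : ℝ}
    (hB : ∀ d e, |B d e| ≤ C) : |(A * B).trace| ≤ C * ∑ d, ∑ e, |A d e| := by
  rw [trace_mul_expand, Finset.mul_sum]
  refine (Finset.abs_sum_le_sum_abs _ _).trans (Finset.sum_le_sum fun d _ => ?_)
  rw [Finset.mul_sum]
  refine (Finset.abs_sum_le_sum_abs _ _).trans (Finset.sum_le_sum fun e _ => ?_)
  rw [abs_mul, mul_comm |B e d|, mul_comm C]
  exact mul_le_mul_of_nonneg_left (hB e d) (abs_nonneg _)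

lemma const_piece {D : ℕ} (κ : ℝ → Matrix (Fin D) (Fin D) ℝ) (B : Matrix (Fin D) (Fin D) ℝ)
    (a b : ℝ)
    (hint : ∀ d e, IntervalIntegrable (fun u => κ u d e) volume a b) :
    ∫ u in a..b, (κ u * B).trace
      = ((Matrix.of fun d e => ∫ u in a..b, κ u d e) * B).trace := by
  have h1 : ∫ u in a..b, (κ u * B).trace
      = ∫ u in a..b, ∑ d, ∑ e, B e d * κ u d e :=
    intervalIntegral.integral_congr fun u _ => trace_mul_expand _ _
  have hsum_ii : ∀ d : Fin D,
      IntervalIntegrable (fun u => ∑ e, B e d * κ u d e) volume a b := by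
    intro d
    rw [intervalIntegrable_iff]
    refine integrable_finset_sum _ fun e _ => ?_
    have := (hint d e).const_mul (B e d)
    rwa [intervalIntegrable_iff] at this
  have h2 := intervalIntegral.integral_finset_sum (μ := volume) (a := a) (b := b)
    (s := (Finset.univ : Finset (Fin D)))
    (f := fun d u => ∑ e, B e d * κ u d e)
    (fun d _ => hsum_ii d)
  have h3 : ∀ d : Fin D, (∫ u in a..b, ∑ e, B e d * κ u d e)
      = ∑ e, B e d * ∫ u in a..b, κ u d e := by
    intro d
    have := intervalIntegral.integral_finset_sum (μ := volume) (a := a) (b := b)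
      (s := (Finset.univ : Finset (Fin D)))
      (f := fun e u => B e d * κ u d e)
      (fun e _ => (hint d e).const_mul _)
    rw [this]
    exact Finset.sum_congr rfl fun e _ => intervalIntegral.integral_const_mul _ _
  rw [h1, h2]
  rw [trace_mul_expand]
  exact Finset.sum_congr rfl fun d _ => h3 d

lemma backward_dir {D : ℕ}
    (κ : ℝ → Matrix (Fin D) (Fin D) ℝ)
    (hκsymm : ∀ u ∈ Set.Icc (0:ℝ) 1, (κ u).IsSymm)
    (hκmeas : ∀ d e, Measurable fun u => κ u d e)
    (hκL2 : ∀ d e, MemLp (fun u => κ u d e) 2 (volume.restrict (Set.Icc (0:ℝ) 1)))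
    (hK : ∀ t ∈ Set.Ico (0:ℝ) 1,
      (Matrix.of fun d e => ∫ u in Set.Icc t 1, κ u d e).PosSemidef)
    (q : ℝ → Matrix (Fin D) (Fin D) ℝ)
    (hqsymm : ∀ u ∈ Set.Icc (0:ℝ) 1, (q u).IsSymm)
    (hqmeas : ∀ d e, Measurable fun u => q u d e)
    (hqL2 : ∀ d e, MemLp (fun u => q u d e) 2 (volume.restrict (Set.Icc (0:ℝ) 1)))
    (hq0 : (q 0).PosSemidef)
    (hqmono : ∀ u ∈ Set.Icc (0:ℝ) 1, ∀ v ∈ Set.Icc (0:ℝ) 1, u ≤ v → (q v - q u).PosSemidef) :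
    0 ≤ ∫ u in Set.Icc (0:ℝ) 1, (κ u * q u).trace := by
  classical
  -- the "primitive" matrix
  set K : ℝ → Matrix (Fin D) (Fin D) ℝ :=
    fun t => Matrix.of fun d e => ∫ u in Set.Icc t 1, κ u d e with hKdef
  -- clipped dyadic-type discretization points
  set pc : ℕ → ℝ → ℝ := fun n u => max 0 (min 1 ((⌊u * n⌋ : ℝ) / n)) with hpc
  have hpc_mem : ∀ n u, pc n u ∈ Set.Icc (0:ℝ) 1 :=
    fun n u => ⟨le_max_left _ _, max_le zero_le_one (min_le_left _ _)⟩
  have hpc_meas : ∀ n : ℕ, Measurable (pc n) := by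
    intro n
    apply Measurable.max measurable_const
    apply Measurable.min measurable_const
    exact ((measurable_from_top.comp (measurable_id.mul_const _).floor)).div_const _
  -- entry bound for q on [0,1]
  obtain ⟨C, hC⟩ : ∃ C : ℝ, ∀ s ∈ Set.Icc (0:ℝ) 1, ∀ d e, |q s d e| ≤ C := by
    refine ⟨(∑ d, ∑ e, |q 0 d e|) + (q 1 - q 0).trace, fun s hs d e => ?_⟩
    have h01 : (0:ℝ) ∈ Set.Icc (0:ℝ) 1 := ⟨le_rfl, zero_le_one⟩
    have h11 : (1:ℝ) ∈ Set.Icc (0:ℝ) 1 := ⟨zero_le_one, le_rfl⟩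
    have hM : (q s - q 0).PosSemidef := hqmono 0 h01 s hs hs.1
    have hM2 : (q 1 - q s).PosSemidef := hqmono s hs 1 h11 hs.2
    have htr : (q s - q 0).trace ≤ (q 1 - q 0).trace := by
      have h := trace_psd_nonneg hM2
      have : (q 1 - q 0).trace = (q 1 - q s).trace + (q s - q 0).trace := by
        rw [← Matrix.trace_add]; congr 1; abel
      linarith
    have hentry : |(q s - q 0) d e| ≤ (q s - q 0).trace := psd_abs_entry_le_trace hM d e
    have h0de : |q 0 d e| ≤ ∑ d, ∑ e, |q 0 d e| := by
      calc |q 0 d e| ≤ ∑ e, |q 0 d e| :=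
            Finset.single_le_sum (f := fun e => |q 0 d e|)
              (fun i _ => abs_nonneg _) (Finset.mem_univ e)
      _ ≤ ∑ d, ∑ e, |q 0 d e| :=
            Finset.single_le_sum (f := fun d => ∑ e, |q 0 d e|)
              (fun i _ => Finset.sum_nonneg fun j _ => abs_nonneg _) (Finset.mem_univ d)
    have : |q s d e| ≤ |q 0 d e| + |(q s - q 0) d e| := by
      have : q s d e = q 0 d e + (q s - q 0) d e := by simp
      rw [this]; exact abs_add_le _ _
    calc |q s d e| ≤ |q 0 d e| + |(q s - q 0) d e| := this
    _ ≤ (∑ d, ∑ e, |q 0 d e|) + (q 1 - q 0).trace := by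
        refine add_le_add h0de (hentry.trans htr)
  -- the approximating integrands
  set F : ℕ → ℝ → ℝ := fun n u => (κ u * q (pc n u)).trace with hF
  -- integrability of κ entries
  have hκint : ∀ d e, IntegrableOn (fun u => κ u d e) (Set.Icc (0:ℝ) 1) volume :=
    fun d e => (hκL2 d e).integrable one_le_two
  -- integrability of F n
  have hFeq : ∀ n u, F n u = ∑ d, ∑ e, q (pc n u) e d * κ u d e := by
    intro n u; rw [hF]; exact trace_mul_expand _ _
  have hFint : ∀ n, IntegrableOn (F n) (Set.Icc (0:ℝ) 1) volume := by
    intro n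
    have : IntegrableOn (fun u => ∑ d, ∑ e, q (pc n u) e d * κ u d e)
        (Set.Icc (0:ℝ) 1) volume := by
      refine integrable_finset_sum _ fun d _ => integrable_finset_sum _ fun e _ => ?_
      refine Integrable.bdd_mul (c := C) (hκint d e) ?_ (Filter.Eventually.of_forall fun u => ?_)
      · exact ((hqmeas e d).comp (hpc_meas n)).aestronglyMeasurable
      · simpa [Real.norm_eq_abs] using hC _ (hpc_mem n u) e d
    exact this.congr_fun (fun u _ => (hFeq n u).symm) measurableSet_Icc
  -- positivity of the discretized integrals
  have key_pos : ∀ n : ℕ, 1 ≤ n → 0 ≤ ∫ u in Set.Icc (0:ℝ) 1, F n u := by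
    intro n hn
    have hn' : (0:ℝ) < n := by exact_mod_cast hn
    set ai : ℕ → ℝ := fun i => (i:ℝ)/n with hai
    have hai0 : ai 0 = 0 := by simp [hai]
    have hain : ai n = 1 := div_self hn'.ne'
    have hai_mono : ∀ i j : ℕ, i ≤ j → ai i ≤ ai j := by
      intro i j hij
      have h : (i:ℝ) ≤ j := by exact_mod_cast hij
      exact div_le_div_of_nonneg_right h hn'.le |>.trans le_rfl
    have hai_mem : ∀ i : ℕ, i ≤ n → ai i ∈ Set.Icc (0:ℝ) 1 := by
      intro i hi
      constructor
      · positivity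
      · rw [div_le_one hn']; exact_mod_cast hi
    have hK1 : K 1 = 0 := by
      ext d e
      show (∫ u in Set.Icc (1:ℝ) 1, κ u d e) = 0
      have h0 : volume.restrict (Set.Icc (1:ℝ) 1) = 0 := by
        rw [Set.Icc_self]
        exact Measure.restrict_eq_zero.mpr (Real.volume_singleton)
      rw [h0, integral_zero_measure]
    have hK_int : ∀ t ∈ Set.Icc (0:ℝ) 1, ∀ d e, K t d e = ∫ u in t..1, κ u d e := by
      intro t ht d e
      rw [intervalIntegral.integral_of_le ht.2]
      show (∫ u in Set.Icc t 1, κ u d e) = _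
      rw [integral_Icc_eq_integral_Ioc]
    have hκii : ∀ (d e : Fin D) (a b : ℝ), a ∈ Set.Icc (0:ℝ) 1 → b ∈ Set.Icc (0:ℝ) 1 →
        a ≤ b → IntervalIntegrable (fun u => κ u d e) volume a b := by
      intro d e a b ha hb hab
      rw [intervalIntegrable_iff, Set.uIoc_of_le hab]
      exact (hκint d e).mono_set fun x hx => ⟨le_trans ha.1 hx.1.le, le_trans hx.2 hb.2⟩
    have hFii : ∀ (a b : ℝ), a ∈ Set.Icc (0:ℝ) 1 → b ∈ Set.Icc (0:ℝ) 1 →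
        a ≤ b → IntervalIntegrable (F n) volume a b := by
      intro a b ha hb hab
      rw [intervalIntegrable_iff, Set.uIoc_of_le hab]
      exact (hFint n).mono_set fun x hx => ⟨le_trans ha.1 hx.1.le, le_trans hx.2 hb.2⟩
    have hsplit : ∫ u in Set.Icc (0:ℝ) 1, F n u
        = ∑ i ∈ Finset.range n, ∫ u in ai i..ai (i+1), F n u := by
      have hsum := intervalIntegral.sum_integral_adjacent_intervals (f := F n)
        (μ := volume) (a := ai) (n := n) ?_
      · rw [hsum, hai0, hain, intervalIntegral.integral_of_le zero_le_one,
          integral_Icc_eq_integral_Ioc]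
      · intro i hi
        exact hFii _ _ (hai_mem i hi.le) (hai_mem (i+1) hi) (hai_mono i (i+1) (Nat.le_succ i))
    have hpiece : ∀ i : ℕ, i < n → ∫ u in ai i..ai (i+1), F n u
        = ((K (ai i) - K (ai (i+1))) * q (ai i)).trace := by
      intro i hi
      have hmi : ai i ∈ Set.Icc (0:ℝ) 1 := hai_mem i hi.le
      have hmi1 : ai (i+1) ∈ Set.Icc (0:ℝ) 1 := hai_mem (i+1) hi
      have hle : ai i ≤ ai (i+1) := hai_mono i (i+1) (Nat.le_succ i)
      have hcong : ∫ u in ai i..ai (i+1), F n u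
          = ∫ u in ai i..ai (i+1), (κ u * q (ai i)).trace := by
        apply intervalIntegral.integral_congr_ae
        have hae : ∀ᵐ u : ℝ, u ≠ ai (i+1) := by
          rw [MeasureTheory.ae_iff]
          have : {u : ℝ | ¬ u ≠ ai (i+1)} = {ai (i+1)} := by
            ext x; simp [not_not]
          rw [this]
          exact Real.volume_singleton
        filter_upwards [hae] with u hu hmem
        have hioc : u ∈ Set.Ioc (ai i) (ai (i+1)) := by rwa [Set.uIoc_of_le hle] at hmem
        have hu2 : u < ai (i+1) := lt_of_le_of_ne hioc.2 hu
        have hf : ⌊u * n⌋ = (i : ℤ) := by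
          rw [Int.floor_eq_iff]
          constructor
          · push_cast
            rw [hai] at hioc
            have := hioc.1
            rw [div_lt_iff₀ hn'] at this
            exact this.le
          · push_cast
            rw [hai] at hu2
            rw [lt_div_iff₀ hn'] at hu2
            exact_mod_cast hu2
        have hpc_eq : pc n u = ai i := by
          rw [hpc]
          simp only
          rw [hf]
          push_cast
          rw [min_eq_right, max_eq_right]
          · positivity
          · rw [div_le_one hn']
            exact_mod_cast hi.le
        show (κ u * q (pc n u)).trace = _
        rw [hpc_eq]
      rw [hcong]
      rw [const_piece κ (q (ai i)) (ai i) (ai (i+1)) (fun d e => hκii d e _ _ hmi hmi1 hle)]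
      congr 2
      ext d e
      show (∫ u in ai i..ai (i+1), κ u d e) = K (ai i) d e - K (ai (i+1)) d e
      have hadd := intervalIntegral.integral_add_adjacent_intervals
        (hκii d e (ai i) (ai (i+1)) hmi hmi1 hle)
        (hκii d e (ai (i+1)) 1 hmi1 ⟨zero_le_one, le_rfl⟩ hmi1.2)
      rw [hK_int _ hmi d e, hK_int _ hmi1 d e, ← hadd]
      ring
    rw [hsplit]
    rw [Finset.sum_congr rfl fun i hi => hpiece i (Finset.mem_range.mp hi)]
    apply abel_nonneg (fun i => K (ai i)) (fun i => q (ai i))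
    · intro i hi
      apply hK
      refine ⟨(hai_mem i hi.le).1, ?_⟩
      rw [hai, div_lt_one hn']
      exact_mod_cast hi
    · rw [hain, hK1]
    · rw [hai0]; exact hq0
    · intro i hi
      exact hqmono (ai i) (hai_mem i (by omega)) (ai (i+1)) (hai_mem (i+1) hi.le)
        (hai_mono i (i+1) (Nat.le_succ i))
  -- convergence
  have key_tendsto : Filter.Tendsto (fun n => ∫ u in Set.Icc (0:ℝ) 1, F n u)
      Filter.atTop (nhds (∫ u in Set.Icc (0:ℝ) 1, (κ u * q u).trace)) := by
    set proj : ℝ → ℝ := fun s => max 0 (min 1 s) with hproj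
    have hproj_mem : ∀ s, proj s ∈ Set.Icc (0:ℝ) 1 :=
      fun s => ⟨le_max_left _ _, max_le zero_le_one (min_le_left _ _)⟩
    have hproj_id : ∀ s ∈ Set.Icc (0:ℝ) 1, proj s = s := by
      intro s hs
      rw [hproj]
      simp only
      rw [min_eq_right hs.2, max_eq_right hs.1]
    have hproj_mono : Monotone proj := by
      intro s t hst
      exact max_le_max le_rfl (min_le_min le_rfl hst)
    set g : Fin D → Fin D → ℝ → ℝ := fun d e s =>
      (Pi.single d 1 + Pi.single e 1) ⬝ᵥ (q (proj s)) *ᵥ (Pi.single d 1 + Pi.single e 1)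
      with hg
    have hg_mono : ∀ d e, Monotone (g d e) := by
      intro d e s t hst
      have hd := hqmono (proj s) (hproj_mem s) (proj t) (hproj_mem t) (hproj_mono hst)
      have h2 := hd.dotProduct_mulVec_nonneg (Pi.single d 1 + Pi.single e 1)
      rw [hg]
      simp only
      rw [star_trivial] at h2
      rw [Matrix.sub_mulVec, dotProduct_sub] at h2
      linarith
    have quad_expand : ∀ (M : Matrix (Fin D) (Fin D) ℝ) (d e : Fin D),
        (Pi.single d 1 + Pi.single e 1) ⬝ᵥ M *ᵥ (Pi.single d 1 + Pi.single e 1)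
          = M d d + M d e + M e d + M e e := by
      intro M d e
      simp [dotProduct, Matrix.mulVec, Pi.single_apply, add_mul, mul_add,
        Finset.sum_add_distrib, Finset.mul_sum, ite_mul, mul_ite]
      ring
    have hg_entry : ∀ (d e : Fin D) (s : ℝ),
        q (proj s) d e = (g d e s - g d d s / 4 - g e e s / 4) / 2 := by
      intro d e s
      have hsym : q (proj s) e d = q (proj s) d e := by
        have h := hqsymm (proj s) (hproj_mem s)
        calc q (proj s) e d = (q (proj s))ᵀ d e := rfl
        _ = q (proj s) d e := by rw [h]
      rw [hg]
      simp only
      rw [quad_expand, quad_expand, quad_expand, hsym]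
      ring
    set S : Set ℝ := ⋃ d : Fin D, ⋃ e : Fin D, {s | ¬ContinuousAt (g d e) s} with hS
    have hS0 : volume S = 0 := by
      refine measure_iUnion_null fun d => measure_iUnion_null fun e => ?_
      exact Set.Countable.measure_zero ((hg_mono d e).countable_not_continuousAt) _
    apply MeasureTheory.tendsto_integral_of_dominated_convergence
      (bound := fun u => C * ∑ d, ∑ e, |κ u d e|)
    · intro n
      exact (hFint n).aestronglyMeasurable
    · refine Integrable.const_mul ?_ _
      exact integrable_finset_sum _ fun d _ =>
        integrable_finset_sum _ fun e _ => (hκint d e).abs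
    · intro n
      refine Filter.Eventually.of_forall fun u => ?_
      rw [Real.norm_eq_abs]
      exact trace_mul_abs_le (fun d e => hC _ (hpc_mem n u) d e)
    · have hae1 : ∀ᵐ u ∂(volume.restrict (Set.Icc (0:ℝ) 1)), u ∈ Set.Icc (0:ℝ) 1 :=
        ae_restrict_mem measurableSet_Icc
      have hae2 : ∀ᵐ u ∂(volume.restrict (Set.Icc (0:ℝ) 1)), u ∉ S :=
        ae_restrict_of_ae (measure_eq_zero_iff_ae_notMem.mp hS0)
      have hae3 : ∀ᵐ u ∂(volume.restrict (Set.Icc (0:ℝ) 1)), u ≠ 1 := by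
        refine ae_restrict_of_ae ?_
        rw [MeasureTheory.ae_iff]
        have : {u : ℝ | ¬ u ≠ 1} = {1} := by ext x; simp [not_not]
        rw [this]
        exact Real.volume_singleton
      filter_upwards [hae1, hae2, hae3] with u hu hSu hne
      have hu1 : u < 1 := lt_of_le_of_ne hu.2 hne
      -- convergence of the discretization points
      have hpcu : Filter.Tendsto (fun n => pc n u) Filter.atTop (nhds u) := by
        have hlow : Filter.Tendsto (fun n : ℕ => u - 1/(n:ℝ)) Filter.atTop (nhds u) := by
          have := tendsto_const_nhds (x := u) (f := Filter.atTop (α := ℕ))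
            |>.sub tendsto_one_div_atTop_nhds_zero_nat
          simpa using this
        refine tendsto_of_tendsto_of_tendsto_of_le_of_le' hlow tendsto_const_nhds ?_ ?_
        · refine Filter.eventually_atTop.mpr ⟨1, fun n hn => ?_⟩
          have hn' : (0:ℝ) < n := by exact_mod_cast hn
          have hfl : u * n - 1 < (⌊u * n⌋ : ℝ) := by
            have := Int.sub_one_lt_floor (u * n)
            linarith
          have hpceq : (⌊u * n⌋ : ℝ) / n ≤ pc n u := by
            rw [hpc]
            simp only
            have h1 : (⌊u * n⌋ : ℝ) / n ≤ u := by
              rw [div_le_iff₀ hn']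
              exact (Int.floor_le _).trans le_rfl
            rw [min_eq_right (h1.trans hu1.le)]
            exact le_max_right _ _
          refine le_trans ?_ hpceq
          rw [le_div_iff₀ hn']
          have : (u - 1/(n:ℝ)) * n = u * n - 1 := by field_simp
          rw [this]
          exact hfl.le
        · refine Filter.eventually_atTop.mpr ⟨1, fun n hn => ?_⟩
          have hn' : (0:ℝ) < n := by exact_mod_cast hn
          have h1 : (⌊u * n⌋ : ℝ) / n ≤ u := by
            rw [div_le_iff₀ hn']
            exact Int.floor_le _
          rw [hpc]
          simp only
          exact max_le hu.1 ((min_le_right _ _).trans h1)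
      -- entrywise convergence
      have hentry : ∀ d e : Fin D,
          Filter.Tendsto (fun n => q (pc n u) d e) Filter.atTop (nhds (q u d e)) := by
        intro d e
        have hcg : ∀ d' e' : Fin D, ContinuousAt (g d' e') u := by
          intro d' e'
          by_contra hcon
          exact hSu (Set.mem_iUnion.mpr ⟨d', Set.mem_iUnion.mpr ⟨e', hcon⟩⟩)
        have hcont : ContinuousAt (fun s => (g d e s - g d d s / 4 - g e e s / 4) / 2) u := by
          exact (((hcg d e).sub ((hcg d d).div_const 4)).sub ((hcg e e).div_const 4)).div_const 2
        have hcomp := hcont.tendsto.comp hpcu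
        have heq1 : ∀ n : ℕ, q (pc n u) d e
            = (g d e (pc n u) - g d d (pc n u) / 4 - g e e (pc n u) / 4) / 2 := by
          intro n
          have := hg_entry d e (pc n u)
          rwa [hproj_id _ (hpc_mem n u)] at this
        have heq2 : q u d e = (g d e u - g d d u / 4 - g e e u / 4) / 2 := by
          have := hg_entry d e u
          rwa [hproj_id _ hu] at this
        rw [heq2]
        exact Filter.Tendsto.congr (fun n => (heq1 n).symm) hcomp
      -- combine
      have hfinal : Filter.Tendsto (fun n => ∑ d, ∑ e, q (pc n u) e d * κ u d e)
          Filter.atTop (nhds (∑ d, ∑ e, q u e d * κ u d e)) := by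
        refine tendsto_finset_sum _ fun d _ => tendsto_finset_sum _ fun e _ => ?_
        exact (hentry e d).mul_const _
      rw [show (κ u * q u).trace = ∑ d, ∑ e, q u e d * κ u d e from trace_mul_expand _ _]
      exact Filter.Tendsto.congr (fun n => (hFeq n u).symm) hfinal
  exact ge_of_tendsto key_tendsto (Filter.eventually_atTop.mpr ⟨1, fun n hn => key_pos n hn⟩)

end backward


/-- Characterization of the dual cone of the cone of increasing positive semidefinite
paths in `L²([0,1]; S^D)`: a square-integrable symmetric-matrix-valued `κ` pairs
nonnegatively with every increasing positive-semidefinite-valued square-integrable path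
if and only if `∫_t^1 κ(u) du` is positive semidefinite for every `t ∈ [0,1)`. -/
theorem dual_cone_characterization {D : ℕ} (hD : 1 ≤ D)
    (κ : ℝ → Matrix (Fin D) (Fin D) ℝ)
    (hκsymm : ∀ u ∈ Set.Icc (0:ℝ) 1, (κ u).IsSymm)
    (hκmeas : ∀ d e, Measurable fun u => κ u d e)
    (hκL2 : ∀ d e, MemLp (fun u => κ u d e) 2 (volume.restrict (Set.Icc (0:ℝ) 1))) :
    (∀ q : ℝ → Matrix (Fin D) (Fin D) ℝ,
        (∀ u ∈ Set.Icc (0:ℝ) 1, (q u).IsSymm) →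
        (∀ d e, Measurable fun u => q u d e) →
        (∀ d e, MemLp (fun u => q u d e) 2 (volume.restrict (Set.Icc (0:ℝ) 1))) →
        (q 0).PosSemidef →
        (∀ u ∈ Set.Icc (0:ℝ) 1, ∀ v ∈ Set.Icc (0:ℝ) 1, u ≤ v → (q v - q u).PosSemidef) →
        0 ≤ ∫ u in Set.Icc (0:ℝ) 1, (κ u * q u).trace) ↔
      (∀ t ∈ Set.Ico (0:ℝ) 1,
        (Matrix.of fun d e => ∫ u in Set.Icc t 1, κ u d e).PosSemidef) := by
  constructor
  · exact forward_dir κ hκsymm hκmeas hκL2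
  · intro hK q hqsymm hqmeas hqL2 hq0 hqmono
    exact backward_dir κ hκsymm hκmeas hκL2 hK q hqsymm hqmeas hqL2 hq0 hqmono
end
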